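/- arXiv:1901.03000 — 4 statements merged into one kernel-verified Lean document; each statement's English description precedes it below -/
import Mathlib

section
/- Assume k − 1 ≤ LR and β_I = β_C. Then the CSN-DSS weights reduce to the homogeneous case: w_i(π^(k)) = (R + d_C − i)·β_C for every 1 ≤ i ≤ k. -/
/-- Relative location `h_π(i) = #{1 ≤ j ≤ i : π j = π i}`. -/
def relLoc (π : ℕ → ℕ) (i : ℕ) : ℕ :=
  ((Finset.Icc 1 i).filter (fun j => π j = π i)).card

/-- Intra-cluster coefficient `a_i(π) = d_I + 1 − h_π(i)` (truncated subtraction). -/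
def aCoef (dI : ℕ) (π : ℕ → ℕ) (i : ℕ) : ℕ :=
  dI + 1 - relLoc π i

/-- Cross-cluster coefficient `b_i(π) = max(0, d_C − (i − h_π(i)))` (truncated subtraction). -/
def bCoef (dC : ℕ) (π : ℕ → ℕ) (i : ℕ) : ℕ :=
  dC - (i - relLoc π i)

/-- Part incoming weight `w_i(π)`: for a separate position (`π i = 0`) it is
`(d_I + d_C + 1 − i)·β_C`, otherwise `a_i(π)·β_I + b_i(π)·β_C`. -/
noncomputable def weight (dI dC : ℕ) (βI βC : ℝ) (π : ℕ → ℕ) (i : ℕ) : ℝ :=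
  if π i = 0 then ((dI + dC + 1 - i : ℕ) : ℝ) * βC
  else (aCoef dI π i : ℝ) * βI + (bCoef dC π i : ℝ) * βC

/-- Min-cut `MC(π) = Σ_{i=1}^k min(α, w_i(π))`. -/
noncomputable def MC (k dI dC : ℕ) (βI βC α : ℝ) (π : ℕ → ℕ) : ℝ :=
  ∑ i ∈ Finset.Icc 1 k, min α (weight dI dC βI βC π i)

/-- A cluster order: a `k`-tuple with entries in `{0, 1, …, L}`. -/
def IsClusterOrder (L k : ℕ) (π : ℕ → ℕ) : Prop :=
  ∀ i, 1 ≤ i → i ≤ k → π i ≤ L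

/-- A selected node distribution `(s_0, s_1, …, s_L)`:
`R ≥ s_1 ≥ s_2 ≥ … ≥ s_L` and `s_0 + s_1 + … + s_L = k`. -/
def IsDist (L R k : ℕ) (s : ℕ → ℕ) : Prop :=
  (∀ i, 1 ≤ i → i + 1 ≤ L → s (i + 1) ≤ s i) ∧
  (∀ i, 1 ≤ i → i ≤ L → s i ≤ R) ∧
  ∑ i ∈ Finset.range (L + 1), s i = k

/-- `π ∈ Π(s)`: `π` is a cluster order with `#{1 ≤ j ≤ k : π j = c} = s c` for all `0 ≤ c ≤ L`. -/
def MemPi (L k : ℕ) (s : ℕ → ℕ) (π : ℕ → ℕ) : Prop :=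
  IsClusterOrder L k π ∧
  ∀ c, c ≤ L → ((Finset.Icc 1 k).filter (fun j => π j = c)).card = s c

/-- Vertical order of distribution `s` (possibly with separate entries, whose positions are
not constrained here):  over the cluster positions (`π i ≠ 0`) in increasing order, relative
locations are nondecreasing, with ties broken by increasing cluster index. -/
def IsVerticalOrder (L k : ℕ) (s : ℕ → ℕ) (π : ℕ → ℕ) : Prop :=
  MemPi L k s π ∧
  ∀ i j, 1 ≤ i → i < j → j ≤ k → π i ≠ 0 → π j ≠ 0 →
    relLoc π i ≤ relLoc π j ∧ (relLoc π i = relLoc π j → π i < π j)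

/-- The distribution `s*` (no separate node): `s*_0 = 0`, `s*_i = R` for `1 ≤ i ≤ ⌊k/R⌋`,
`s*_{⌊k/R⌋+1} = k − ⌊k/R⌋·R`, and `0` beyond. -/
def sStar0 (R k : ℕ) : ℕ → ℕ := fun i =>
  if i = 0 then 0
  else if i ≤ k / R then R
  else if i = k / R + 1 then k - k / R * R
  else 0

/-- The distribution with one separate node: `s_0 = 1`, `s_i = R` for `1 ≤ i ≤ ⌊(k−1)/R⌋`,
`s_{⌊(k−1)/R⌋+1} = (k−1) − ⌊(k−1)/R⌋·R`, and `0` beyond. -/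
def sStar1 (R k : ℕ) : ℕ → ℕ := fun i =>
  if i = 0 then 1
  else if i ≤ (k - 1) / R then R
  else if i = (k - 1) / R + 1 then (k - 1) - (k - 1) / R * R
  else 0

/-- `π^(j)`: the cluster order with exactly one separate entry, located at position `j`,
whose cluster entries form the vertical order of the distribution `sStar1 R k`. -/
def IsPiJ (L R k j : ℕ) (π : ℕ → ℕ) : Prop :=
  π j = 0 ∧ IsVerticalOrder L k (sStar1 R k) π

/-- when `β_I = β_C` the CSN-DSS weights reduce to the homogeneous case:
`w_i(π^(k)) = (R + d_C − i)·β_C` for every `1 ≤ i ≤ k`. -/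
theorem stmt12 (L R k dI dC : ℕ) (βI βC : ℝ)
    (hL : 1 ≤ L) (hR : 2 ≤ R) (hk : 2 ≤ k)
    (hdI : dI = R - 1) (hdC : 1 ≤ dC) (hkd : k ≤ dI + dC)
    (hβ : βC ≤ βI) (hβC : 0 < βC)
    (hk1LR : k - 1 ≤ L * R) (hEq : βI = βC)
    (π : ℕ → ℕ) (hπ : IsPiJ L R k k π) :
    ∀ i, 1 ≤ i → i ≤ k →
      weight dI dC βI βC π i = ((R + dC - i : ℕ) : ℝ) * βC := by
  obtain ⟨hπk, ⟨hco, hcount⟩, hvert⟩ := hπ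
  -- uniqueness of the zero position
  have hzero : ∀ j, 1 ≤ j → j ≤ k → π j = 0 → j = k := by
    intro j hj1 hjk hj0
    by_contra hne
    have hs0 : ((Finset.Icc 1 k).filter (fun j => π j = 0)).card = 1 := by
      simpa [sStar1] using hcount 0 (Nat.zero_le L)
    have hsub : ({j, k} : Finset ℕ) ⊆ (Finset.Icc 1 k).filter (fun j => π j = 0) := by
      intro x hx
      rcases Finset.mem_insert.mp hx with rfl | hx
      · exact Finset.mem_filter.mpr ⟨Finset.mem_Icc.mpr ⟨hj1, hjk⟩, hj0⟩
      · have hxk : x = k := Finset.mem_singleton.mp hx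
        exact Finset.mem_filter.mpr ⟨Finset.mem_Icc.mpr ⟨by omega, by omega⟩,
          by rw [hxk]; exact hπk⟩
    have h2 : ({j, k} : Finset ℕ).card = 2 := Finset.card_pair hne
    have := Finset.card_le_card hsub
    omega
  intro i hi1 hik
  rcases eq_or_lt_of_le hik with rfl | hik'
  · -- i = k : separate node
    have : (dI + dC + 1 - i : ℕ) = (R + dC - i : ℕ) := by omega
    simp [weight, hπk, this]
  · -- i < k : a cluster position
    have hik1 : i ≤ k - 1 := by omega
    have hπi : π i ≠ 0 := by
      intro h0
      have := hzero i hi1 hik h0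
      omega
    -- basic bounds on h = relLoc π i
    have hh1 : 1 ≤ relLoc π i := by
      have : i ∈ (Finset.Icc 1 i).filter (fun j => π j = π i) :=
        Finset.mem_filter.mpr ⟨Finset.mem_Icc.mpr ⟨hi1, le_refl i⟩, rfl⟩
      have := Finset.card_pos.mpr ⟨i, this⟩
      simpa [relLoc] using this
    have hhi : relLoc π i ≤ i := by
      have := Finset.card_filter_le (Finset.Icc 1 i) (fun j => π j = π i)
      simpa [relLoc, Nat.card_Icc] using this
    have hsub2 : (Finset.Icc 1 i).filter (fun j => π j = π i) ⊆
        (Finset.Icc 1 k).filter (fun j => π j = π i) := by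
      apply Finset.filter_subset_filter
      exact Finset.Icc_subset_Icc_right hik
    have hsR : ∀ c, 1 ≤ c → sStar1 R k c ≤ R := by
      intro c hc
      have hmod := Nat.mod_add_div (k - 1) R
      have hlt : (k - 1) % R < R := Nat.mod_lt _ (by omega)
      have hcm : (k - 1) / R * R = R * ((k - 1) / R) := Nat.mul_comm _ _
      unfold sStar1
      split
      · omega
      · split
        · exact le_refl R
        · split
          · omega
          · omega
    have hhR : relLoc π i ≤ R := by
      have h1 : relLoc π i ≤ ((Finset.Icc 1 k).filter (fun j => π j = π i)).card :=
        Finset.card_le_card hsub2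
      have h2 := hcount (π i) (hco i hi1 hik)
      have h3 := hsR (π i) (by omega)
      omega
    -- the key bound via cluster 1
    set F : Finset ℕ := (Finset.Icc 1 k).filter (fun j => π j = 1) with hF
    set S : ℕ := sStar1 R k 1 with hSdef
    have hFcard : F.card = S := hcount 1 hL
    have hFne0 : ∀ x ∈ F, 1 ≤ x ∧ x ≤ k - 1 ∧ π x = 1 := by
      intro x hx
      obtain ⟨hx1, hx2⟩ := Finset.mem_filter.mp hx
      obtain ⟨hxa, hxb⟩ := Finset.mem_Icc.mp hx1
      have : x ≠ k := by
        intro h; rw [h] at hx2; rw [hπk] at hx2; exact one_ne_zero hx2.symm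
      exact ⟨hxa, by omega, hx2⟩
    set A : Finset ℕ := F.filter (fun x => x ≤ i) with hA
    set B : Finset ℕ := F.filter (fun x => ¬ x ≤ i) with hB
    have hABcard : A.card + B.card = S := by
      rw [hA, hB, Finset.card_filter_add_card_filter_not]
      exact hFcard
    have hBle : B.card ≤ k - 1 - i := by
      have hBsub : B ⊆ Finset.Icc (i + 1) (k - 1) := by
        intro x hx
        obtain ⟨hx1, hx2⟩ := Finset.mem_filter.mp hx
        obtain ⟨_, hxk, _⟩ := hFne0 x hx1
        exact Finset.mem_Icc.mpr ⟨by omega, hxk⟩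
      have := Finset.card_le_card hBsub
      simpa [Nat.card_Icc] using this
    have hkey : i - relLoc π i ≤ k - 1 - S := by
      rcases Nat.eq_zero_or_pos A.card with hA0 | hApos
      · -- all of F lies beyond i
        omega
      · obtain ⟨p, hpA⟩ := Finset.card_pos.mp hApos
        have hne : A.Nonempty := ⟨p, hpA⟩
        set q : ℕ := A.max' hne with hq
        have hqA : q ∈ A := A.max'_mem hne
        obtain ⟨hq1, hqi⟩ := Finset.mem_filter.mp hqA
        obtain ⟨hqa, hqk, hqπ⟩ := hFne0 q hq1
        have hrelq : relLoc π q = A.card := by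
          have : (Finset.Icc 1 q).filter (fun j => π j = π q) = A := by
            ext x
            simp only [Finset.mem_filter, Finset.mem_Icc, hA, hF, hqπ]
            constructor
            · rintro ⟨⟨hx1, hx2⟩, hx3⟩
              exact ⟨⟨⟨hx1, by omega⟩, hx3⟩, by omega⟩
            · rintro ⟨⟨⟨hx1, hx2⟩, hx3⟩, hx4⟩
              have : x ∈ A := by
                simp only [hA, hF, Finset.mem_filter, Finset.mem_Icc]
                exact ⟨⟨⟨hx1, hx2⟩, hx3⟩, hx4⟩
              exact ⟨⟨hx1, A.le_max' x this⟩, hx3⟩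
          rw [relLoc, this]
        have hqle : relLoc π q ≤ relLoc π i := by
          rcases eq_or_lt_of_le hqi with heq | hlt
          · rw [heq]
          · exact (hvert q i hqa hlt hik (by omega) hπi).1
        omega
    have hSval : S = R ∨ S = k - 1 := by
      rw [hSdef]
      rcases Nat.lt_or_ge (k - 1) R with hc | hc
      · have hd : (k - 1) / R = 0 := Nat.div_eq_of_lt hc
        right
        simp [sStar1, hd]
      · have hd : 1 ≤ (k - 1) / R := Nat.one_le_div_iff (by omega) |>.mpr hc
        left
        simp [sStar1, hd]
    have hbnd : i - relLoc π i ≤ dC := by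
      rcases hSval with h | h <;> omega
    -- conclude
    have hnat : (dI + 1 - relLoc π i) + (dC - (i - relLoc π i)) = R + dC - i := by
      omega
    rw [weight, if_neg hπi, hEq, ← add_mul, aCoef, bCoef, ← Nat.cast_add, hnat]
end

section
/- Assume k − 1 ≤ LR and fix 1 ≤ j ≤ k − 1. Then w_i(π^(j)) = w_i(π^(j+1)) for every position i ∈ {1, …, k} with i ≠ j and i ≠ j + 1. -/
/-! On the cluster positions of a vertical order the relative location is nondecreasing, so the
`r`-th cluster position has relative location `h` exactly when
`#{x | relLoc x ≤ h - 1} < r ≤ #{x | relLoc x ≤ h}`. These counts are `∑_c min h (s c)`,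
which depend only on the distribution `s`. Moving the separate entry of `π^(j)` from `j` to `j + 1`
does not change the rank of any other position among the cluster positions, hence it changes
neither its relative location nor its weight. -/

open Finset

section RelativeLocation

variable (π : ℕ → ℕ)

theorem relLoc_pos {i : ℕ} (hi : 1 ≤ i) : 0 < relLoc π i :=
  card_pos.mpr ⟨i, mem_filter.mpr ⟨mem_Icc.mpr ⟨hi, le_rfl⟩, rfl⟩⟩

theorem relLoc_lt_relLoc {i i' : ℕ} (hi : 1 ≤ i) (hii' : i < i') (hπ : π i = π i') :
    relLoc π i < relLoc π i' := by
  refine card_lt_card ((ssubset_iff_of_subset fun x hx => ?_).mpr ⟨i', ?_, ?_⟩)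
  · simp only [mem_filter, mem_Icc] at hx ⊢
    exact ⟨⟨hx.1.1, hx.1.2.trans hii'.le⟩, hx.2.trans hπ⟩
  · simp only [mem_filter, mem_Icc]
    exact ⟨⟨hi.trans hii'.le, le_rfl⟩, trivial⟩
  · simp only [mem_filter, mem_Icc]
    omega

theorem injOn_relLoc_filter_eq (k c : ℕ) :
    Set.InjOn (relLoc π) ((Icc 1 k).filter (π · = c) : Set ℕ) := by
  intro x hx y hy hxy
  simp only [coe_filter, mem_Icc, Set.mem_ofPred_eq] at hx hy
  by_contra hne
  rcases Nat.lt_or_gt_of_ne hne with h | h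
  · exact (relLoc_lt_relLoc π hx.1.1 h (hx.2.trans hy.2.symm)).ne hxy
  · exact (relLoc_lt_relLoc π hy.1.1 h (hy.2.trans hx.2.symm)).ne' hxy

theorem image_relLoc_filter_eq (k c : ℕ) :
    ((Icc 1 k).filter (π · = c)).image (relLoc π) = Icc 1 #((Icc 1 k).filter (π · = c)) := by
  refine eq_of_subset_of_card_le (fun ℓ hℓ => ?_) ?_
  · obtain ⟨x, hx, rfl⟩ := mem_image.mp hℓ
    simp only [mem_filter, mem_Icc] at hx
    refine mem_Icc.mpr ⟨relLoc_pos π hx.1.1, card_le_card fun y hy => ?_⟩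
    simp only [mem_filter, mem_Icc] at hy ⊢
    exact ⟨⟨hy.1.1, hy.1.2.trans hx.1.2⟩, hy.2.trans hx.2⟩
  · rw [card_image_of_injOn (injOn_relLoc_filter_eq π k c), Nat.card_Icc, Nat.add_sub_cancel]

theorem card_filter_relLoc_le (k c ℓ : ℕ) :
    #{x ∈ (Icc 1 k).filter (π · = c) | relLoc π x ≤ ℓ} =
      min ℓ #((Icc 1 k).filter (π · = c)) := by
  rw [← card_image_of_injOn ((injOn_relLoc_filter_eq π k c).mono (filter_subset _ _)),
    ← filter_image (p := (· ≤ ℓ)), image_relLoc_filter_eq]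
  have hcut : (Icc 1 #((Icc 1 k).filter (π · = c))).filter (· ≤ ℓ)
      = Icc 1 (min ℓ #((Icc 1 k).filter (π · = c))) := by
    ext x
    simp only [mem_filter, mem_Icc, le_min_iff]
    omega
  rw [hcut, Nat.card_Icc, Nat.add_sub_cancel]

end RelativeLocation

def clusterPos (k : ℕ) (π : ℕ → ℕ) : Finset ℕ :=
  (Icc 1 k).filter (π · ≠ 0)

section VerticalOrder

variable {L k : ℕ} {s π : ℕ → ℕ}

theorem card_clusterPos_relLoc_le (hπ : MemPi L k s π) (ℓ : ℕ) :
    #{x ∈ clusterPos k π | relLoc π x ≤ ℓ} = ∑ c ∈ Icc 1 L, min ℓ (s c) := by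
  have hmaps : ∀ x ∈ {x ∈ clusterPos k π | relLoc π x ≤ ℓ}, π x ∈ Icc 1 L := by
    intro x hx
    simp only [clusterPos, mem_filter, mem_Icc] at hx ⊢
    exact ⟨Nat.one_le_iff_ne_zero.mpr hx.1.2, hπ.1 x hx.1.1.1 hx.1.1.2⟩
  rw [card_eq_sum_card_fiberwise hmaps]
  refine sum_congr rfl fun c hc => ?_
  rw [← hπ.2 c (mem_Icc.mp hc).2, ← card_filter_relLoc_le]
  congr 1
  ext x
  simp only [clusterPos, mem_filter, mem_Icc]
  constructor
  · rintro ⟨⟨⟨hx, -⟩, hℓ⟩, rfl⟩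
    exact ⟨⟨hx, rfl⟩, hℓ⟩
  · rintro ⟨⟨hx, rfl⟩, hℓ⟩
    exact ⟨⟨⟨hx, Nat.one_le_iff_ne_zero.mp (mem_Icc.mp hc).1⟩, hℓ⟩, rfl⟩

theorem card_clusterPos_le_le_card_relLoc_le (hπ : IsVerticalOrder L k s π) {i : ℕ}
    (hi : i ∈ clusterPos k π) :
    #{x ∈ clusterPos k π | x ≤ i} ≤
      #{x ∈ clusterPos k π | relLoc π x ≤ relLoc π i} := by
  simp only [clusterPos, mem_filter, mem_Icc] at hi
  refine card_le_card fun x hx => ?_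
  simp only [clusterPos, mem_filter, mem_Icc] at hx ⊢
  refine ⟨hx.1, (eq_or_lt_of_le hx.2).elim (fun h => h ▸ le_rfl) fun h => ?_⟩
  exact (hπ.2 x i hx.1.1.1 h hi.1.2 hx.1.2 hi.2).1

theorem card_relLoc_le_lt_card_clusterPos_le (hπ : IsVerticalOrder L k s π) {i ℓ : ℕ}
    (hi : i ∈ clusterPos k π) (hℓ : ℓ < relLoc π i) :
    #{x ∈ clusterPos k π | relLoc π x ≤ ℓ} < #{x ∈ clusterPos k π | x ≤ i} := by
  refine card_lt_card ((ssubset_iff_of_subset fun x hx => ?_).mpr ⟨i, ?_, ?_⟩)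
  · simp only [clusterPos, mem_filter, mem_Icc] at hi hx ⊢
    refine ⟨hx.1, not_lt.mp fun hix => ?_⟩
    have := (hπ.2 i x hi.1.1 hix hx.1.1.2 hi.2 hx.1.2).1
    omega
  · exact mem_filter.mpr ⟨hi, le_rfl⟩
  · simp only [mem_filter, not_and, not_le]
    exact fun _ => hℓ

theorem relLoc_le_of_card_clusterPos_le {πa πb : ℕ → ℕ} (ha : IsVerticalOrder L k s πa)
    (hb : IsVerticalOrder L k s πb) {ia ib : ℕ} (hia : ia ∈ clusterPos k πa)
    (hib : ib ∈ clusterPos k πb)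
    (hrank : #{x ∈ clusterPos k πb | x ≤ ib} ≤ #{x ∈ clusterPos k πa | x ≤ ia}) :
    relLoc πb ib ≤ relLoc πa ia := by
  by_contra! hlt
  have hlt' := card_relLoc_le_lt_card_clusterPos_le hb hib hlt
  have hle := card_clusterPos_le_le_card_relLoc_le ha hia
  rw [card_clusterPos_relLoc_le hb.1] at hlt'
  rw [card_clusterPos_relLoc_le ha.1] at hle
  omega

end VerticalOrder

theorem clusterPos_eq_erase {L R k j : ℕ} {π : ℕ → ℕ} (hπ : IsPiJ L R k j π)
    (hj : j ∈ Icc 1 k) : clusterPos k π = (Icc 1 k).erase j := by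
  have hzero : (Icc 1 k).filter (π · = 0) = {j} := by
    have hcard : #((Icc 1 k).filter (π · = 0)) = 1 := by
      simpa [sStar1] using hπ.2.1.2 0 (Nat.zero_le L)
    obtain ⟨a, ha⟩ := card_eq_one.mp hcard
    have hjmem : j ∈ (Icc 1 k).filter (π · = 0) := mem_filter.mpr ⟨hj, hπ.1⟩
    rw [ha, mem_singleton] at hjmem
    rwa [hjmem]
  rw [clusterPos, filter_not, hzero, sdiff_singleton_eq_erase]

theorem filter_le_erase_Icc {k j i : ℕ} (hi : i ≤ k) :
    ((Icc 1 k).erase j).filter (· ≤ i) = (Icc 1 i).erase j := by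
  ext x
  simp only [mem_filter, mem_erase, mem_Icc]
  omega

theorem card_erase_Icc_eq_card_erase_Icc_succ {i j : ℕ} (hj : 1 ≤ j) (hij : i ≠ j) :
    #((Icc 1 i).erase j) = #((Icc 1 i).erase (j + 1)) := by
  rcases lt_or_gt_of_ne hij with h | h
  · rw [erase_eq_of_notMem (by simp only [mem_Icc]; omega),
      erase_eq_of_notMem (by simp only [mem_Icc]; omega)]
  · rw [card_erase_of_mem (by simp only [mem_Icc]; omega),
      card_erase_of_mem (by simp only [mem_Icc]; omega)]

theorem weight_eq_of_relLoc_eq (dI dC : ℕ) (βI βC : ℝ) {πa πb : ℕ → ℕ} {i : ℕ}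
    (ha : πa i ≠ 0) (hb : πb i ≠ 0) (h : relLoc πa i = relLoc πb i) :
    weight dI dC βI βC πa i = weight dI dC βI βC πb i := by
  simp only [weight, aCoef, bCoef, if_neg ha, if_neg hb, h]

theorem stmt14_general (L R k dI dC : ℕ) (βI βC : ℝ)
    (j : ℕ) (hj1 : 1 ≤ j) (hjk : j + 1 ≤ k)
    (πa πb : ℕ → ℕ) (ha : IsPiJ L R k j πa) (hb : IsPiJ L R k (j + 1) πb) :
    ∀ i, 1 ≤ i → i ≤ k → i ≠ j → i ≠ j + 1 →
      weight dI dC βI βC πa i = weight dI dC βI βC πb i := by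
  intro i hi1 hik hij hij1
  have hpa := clusterPos_eq_erase ha (mem_Icc.mpr ⟨hj1, by omega⟩)
  have hpb := clusterPos_eq_erase hb (mem_Icc.mpr ⟨by omega, hjk⟩)
  have hia : i ∈ clusterPos k πa := by simp only [hpa, mem_erase, mem_Icc]; omega
  have hib : i ∈ clusterPos k πb := by simp only [hpb, mem_erase, mem_Icc]; omega
  have hrank : #{x ∈ clusterPos k πa | x ≤ i} = #{x ∈ clusterPos k πb | x ≤ i} := by
    rw [hpa, hpb, filter_le_erase_Icc hik, filter_le_erase_Icc hik]
    exact card_erase_Icc_eq_card_erase_Icc_succ hj1 hij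
  refine weight_eq_of_relLoc_eq dI dC βI βC (mem_filter.mp hia).2 (mem_filter.mp hib).2 ?_
  exact le_antisymm (relLoc_le_of_card_clusterPos_le hb.2 ha.2 hib hia hrank.le)
    (relLoc_le_of_card_clusterPos_le ha.2 hb.2 hia hib hrank.ge)

/-- `w_i(π^(j)) = w_i(π^(j+1))` for every position `i ∉ {j, j+1}`. -/
theorem stmt14 (L R k dI dC : ℕ) (βI βC : ℝ)
    (hL : 1 ≤ L) (hR : 2 ≤ R) (hk : 2 ≤ k)
    (hdI : dI = R - 1) (hdC : 1 ≤ dC) (hkd : k ≤ dI + dC)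
    (hβ : βC ≤ βI) (hβC : 0 < βC)
    (hk1LR : k - 1 ≤ L * R)
    (j : ℕ) (hj1 : 1 ≤ j) (hjk : j + 1 ≤ k)
    (πa πb : ℕ → ℕ) (ha : IsPiJ L R k j πa) (hb : IsPiJ L R k (j + 1) πb) :
    ∀ i, 1 ≤ i → i ≤ k → i ≠ j → i ≠ j + 1 →
      weight dI dC βI βC πa i = weight dI dC βI βC πb i :=
  stmt14_general L R k dI dC βI βC j hj1 hjk πa πb ha hb
end

section
/- Assume k − 1 ≤ LR and fix 1 ≤ j ≤ k − 1. Then w_{j+1}(π^(j)) ≥ w_{j+1}(π^(j+1)) = (d_I + d_C − j)·β_C and w_j(π^(j+1)) ≥ w_j(π^(j)) = (d_I + d_C + 1 − j)·β_C. -/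
lemma relLoc_le_self (π : ℕ → ℕ) (i : ℕ) : relLoc π i ≤ i := by
  have h : ((Finset.Icc 1 i).filter (fun j => π j = π i)).card ≤ (Finset.Icc 1 i).card :=
    Finset.card_filter_le _ _
  simpa [relLoc, Nat.card_Icc] using h

lemma relLoc_le_s (L k : ℕ) (s π : ℕ → ℕ) (h : MemPi L k s π) (i : ℕ)
    (hik : i ≤ k) (hπL : π i ≤ L) : relLoc π i ≤ s (π i) := by
  rw [← h.2 (π i) hπL, relLoc]
  apply Finset.card_le_card
  intro x hx
  simp only [Finset.mem_filter, Finset.mem_Icc] at *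
  exact ⟨⟨hx.1.1, hx.1.2.trans hik⟩, hx.2⟩

lemma ne_zero_of_other (L k : ℕ) (s π : ℕ → ℕ) (h : MemPi L k s π) (hs0 : s 0 = 1)
    (j0 i : ℕ) (hj0 : 1 ≤ j0) (hj0k : j0 ≤ k) (hπj0 : π j0 = 0)
    (hi : 1 ≤ i) (hik : i ≤ k) (hne : i ≠ j0) : π i ≠ 0 := by
  intro hπi
  have hcard := h.2 0 (Nat.zero_le L)
  rw [hs0] at hcard
  have hsub : ({j0, i} : Finset ℕ) ⊆ (Finset.Icc 1 k).filter (fun j => π j = 0) := by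
    intro x hx
    simp only [Finset.mem_insert, Finset.mem_singleton] at hx
    rcases hx with rfl | rfl <;>
      simp [Finset.mem_filter, Finset.mem_Icc, *]
  have h2 := Finset.card_le_card hsub
  rw [hcard] at h2
  have h3 : ({j0, i} : Finset ℕ).card = 2 := by
    rw [Finset.card_insert_of_notMem (by simpa using (Ne.symm hne)), Finset.card_singleton]
  omega

lemma sStar1_le_R (R k c : ℕ) (hR : 2 ≤ R) : sStar1 R k c ≤ R := by
  have e := Nat.mod_add_div' (k - 1) R
  have hm : (k - 1) % R < R := Nat.mod_lt _ (by omega)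
  have h3 : k - 1 - (k - 1) / R * R ≤ R := by
    generalize (k - 1) % R = r at e hm
    generalize (k - 1) / R * R = q at e ⊢
    omega
  unfold sStar1
  split_ifs
  · omega
  · exact le_rfl
  · exact h3
  · exact Nat.zero_le R

lemma weight_ge (dI dC : ℕ) (βI βC : ℝ) (hβ : βC ≤ βI) (hβC : 0 < βC)
    (π : ℕ → ℕ) (i : ℕ) (hne : π i ≠ 0)
    (hrel : relLoc π i ≤ dI + 1) :
    ((dI + dC + 1 - i : ℕ) : ℝ) * βC ≤ weight dI dC βI βC π i := by
  rw [weight, if_neg hne]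
  have hri : relLoc π i ≤ i := relLoc_le_self π i
  have hnat : dI + dC + 1 - i ≤ aCoef dI π i + bCoef dC π i := by
    unfold aCoef bCoef; omega
  have h1 : ((dI + dC + 1 - i : ℕ) : ℝ) * βC ≤ ((aCoef dI π i + bCoef dC π i : ℕ) : ℝ) * βC := by
    apply mul_le_mul_of_nonneg_right _ hβC.le
    exact_mod_cast hnat
  refine h1.trans ?_
  push_cast
  nlinarith [Nat.cast_nonneg (α := ℝ) (aCoef dI π i), Nat.cast_nonneg (α := ℝ) (bCoef dC π i)]

/-- `w_{j+1}(π^(j)) ≥ w_{j+1}(π^(j+1)) = (d_I + d_C − j)·β_C` and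
`w_j(π^(j+1)) ≥ w_j(π^(j)) = (d_I + d_C + 1 − j)·β_C`. -/
theorem stmt15 (L R k dI dC : ℕ) (βI βC : ℝ)
    (hL : 1 ≤ L) (hR : 2 ≤ R) (hk : 2 ≤ k)
    (hdI : dI = R - 1) (hdC : 1 ≤ dC) (hkd : k ≤ dI + dC)
    (hβ : βC ≤ βI) (hβC : 0 < βC)
    (hk1LR : k - 1 ≤ L * R)
    (j : ℕ) (hj1 : 1 ≤ j) (hjk : j + 1 ≤ k)
    (πa πb : ℕ → ℕ) (ha : IsPiJ L R k j πa) (hb : IsPiJ L R k (j + 1) πb) :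
    (weight dI dC βI βC πb (j + 1) ≤ weight dI dC βI βC πa (j + 1) ∧
      weight dI dC βI βC πb (j + 1) = ((dI + dC - j : ℕ) : ℝ) * βC) ∧
    (weight dI dC βI βC πa j ≤ weight dI dC βI βC πb j ∧
      weight dI dC βI βC πa j = ((dI + dC + 1 - j : ℕ) : ℝ) * βC) := by
  obtain ⟨haj, hav⟩ := ha
  obtain ⟨hbj, hbv⟩ := hb
  have hs0 : sStar1 R k 0 = 1 := rfl
  -- πa (j+1) ≠ 0 and πb j ≠ 0
  have haj1 : πa (j + 1) ≠ 0 :=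
    ne_zero_of_other L k _ πa hav.1 hs0 j (j + 1) hj1 (by omega) haj (by omega) hjk (by omega)
  have hbjne : πb j ≠ 0 :=
    ne_zero_of_other L k _ πb hbv.1 hs0 (j + 1) j (by omega) hjk hbj hj1 (by omega) (by omega)
  -- relLoc bounds
  have hRdI : dI + 1 = R := by omega
  have hrela : relLoc πa (j + 1) ≤ dI + 1 := by
    have h1 : relLoc πa (j + 1) ≤ sStar1 R k (πa (j + 1)) :=
      relLoc_le_s L k _ πa hav.1 (j + 1) hjk (hav.1.1 (j + 1) (by omega) hjk)
    have h2 := sStar1_le_R R k (πa (j + 1)) hR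
    omega
  have hrelb : relLoc πb j ≤ dI + 1 := by
    have h1 : relLoc πb j ≤ sStar1 R k (πb j) :=
      relLoc_le_s L k _ πb hbv.1 j (by omega) (hbv.1.1 j hj1 (by omega))
    have h2 := sStar1_le_R R k (πb j) hR
    omega
  -- weight equalities for separate positions
  have hwb : weight dI dC βI βC πb (j + 1) = ((dI + dC - j : ℕ) : ℝ) * βC := by
    rw [weight, if_pos hbj]
    congr 2
    omega
  have hwa : weight dI dC βI βC πa j = ((dI + dC + 1 - j : ℕ) : ℝ) * βC := by
    rw [weight, if_pos haj]
  refine ⟨⟨?_, hwb⟩, ?_, hwa⟩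
  · rw [hwb]
    have h := weight_ge dI dC βI βC hβ hβC πa (j + 1) haj1 hrela
    have he : dI + dC + 1 - (j + 1) = dI + dC - j := by omega
    rwa [he] at h
  · rw [hwa]
    exact weight_ge dI dC βI βC hβ hβC πb j hbjne hrelb
end

section
/- Assume k ≤ LR and that R divides k. Then w_i(π*(s*)) = w_i(π^(k)) for every 1 ≤ i ≤ k, and consequently MC(π*(s*)) = MC(π^(k)); that is, when R | k, adding a separate node does not change the system capacity. -/
/-!
When `R ∣ k`, say `k = m * R`, the distribution `s*` consists of `m` full clusters, so its
vertical order fills an `R × m` grid row by row: position `i` has relative location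
`(i - 1) / m + 1`. The order `π^(k)` fills the same grid except for its last cell, which it
replaces by the separate node at position `k`. The two orders therefore have the same weights
at every `i < k`, and at `i = k` the cluster node sits at relative location `R = d_I + 1`, so its
intra-cluster coefficient vanishes and its weight `(d_C - (k - R))·β_C` is that of a separate
node at position `k`.

The row-by-row description holds because `i ↦ (h_π(i), π_i)` is strictly increasing for the
lexicographic order and takes its values among the first `n` grid cells, so it must coincide with
the row-major enumeration of the grid.
-/

open Finset

theorem StrictMono.eq_of_range_subset {β γ : Type*} [LinearOrder β] [Finite β] [Preorder γ]
    {f g : β → γ} (hf : StrictMono f) (hg : StrictMono g) (h : Set.range f ⊆ Set.range g) :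
    f = g :=
  (hf.range_inj hg).mp <| Set.eq_of_subset_of_ncard_le h <| by
    rw [Set.ncard_range_of_injective hf.injective, Set.ncard_range_of_injective hg.injective]

theorem Nat.strictMono_toLex_div_mod (m : ℕ) : StrictMono fun j : ℕ => toLex (j / m, j % m) := by
  intro i j hij
  rw [Prod.Lex.toLex_lt_toLex]
  rcases (Nat.div_le_div_right (c := m) hij.le).lt_or_eq with hlt | heq
  · exact Or.inl hlt
  · refine Or.inr ⟨heq, ?_⟩
    have hi := Nat.div_add_mod i m
    have hj := Nat.div_add_mod j m
    rw [heq] at hi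
    omega

theorem Nat.mul_sub_one_div {a b : ℕ} (ha : 0 < a) (hb : 0 < b) : (a * b - 1) / b = a - 1 := by
  have hsub : (a - 1) * b = a * b - b := Nat.sub_one_mul a b
  have hab : b ≤ a * b := Nat.le_mul_of_pos_left b ha
  exact Nat.div_eq_of_lt_le (by omega) (by rw [Nat.sub_add_cancel ha]; omega)

theorem Nat.sub_one_mul_add_le {h H m c : ℕ} (h1 : 1 ≤ h) (hH : h ≤ H) (hc : c ≤ m) :
    (h - 1) * m + c ≤ H * m := by
  have hle : (h - 1) * m ≤ (H - 1) * m := Nat.mul_le_mul_right m (by omega)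
  have hH' : (H - 1) * m + m = H * m := by
    rw [Nat.sub_one_mul, Nat.sub_add_cancel (Nat.le_mul_of_pos_left m (by omega))]
  omega

lemma one_le_relLoc (π : ℕ → ℕ) {i : ℕ} (hi : 1 ≤ i) : 1 ≤ relLoc π i :=
  card_pos.mpr ⟨i, by simp [hi]⟩

lemma relLoc_le_card_filter (π : ℕ → ℕ) {i n : ℕ} (hin : i ≤ n) :
    relLoc π i ≤ ((Icc 1 n).filter (fun j => π j = π i)).card :=
  card_le_card (filter_subset_filter _ (Icc_subset_Icc_right hin))

theorem relLoc_eq_of_vertical {π : ℕ → ℕ} {m n : ℕ}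
    (hcell : ∀ i, 1 ≤ i → i ≤ n → 1 ≤ π i ∧ π i ≤ m ∧ (relLoc π i - 1) * m + π i ≤ n)
    (hvert : ∀ i j, 1 ≤ i → i < j → j ≤ n →
      relLoc π i ≤ relLoc π j ∧ (relLoc π i = relLoc π j → π i < π j))
    {i : ℕ} (hi : 1 ≤ i) (hin : i ≤ n) :
    relLoc π i = (i - 1) / m + 1 := by
  -- the 0-indexed grid cell (row, column) of position `j`: as placed by `π`, and in row-major order
  let f : Set.Icc 1 n → ℕ ×ₗ ℕ := fun j => toLex (relLoc π j - 1, π j - 1)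
  let g : Set.Icc 1 n → ℕ ×ₗ ℕ := fun j => toLex ((j - 1 : ℕ) / m, (j - 1 : ℕ) % m)
  have hf : StrictMono f := by
    rintro ⟨a, ha⟩ ⟨b, hb⟩ hab
    have hab' : a < b := hab
    obtain ⟨hle, htie⟩ := hvert a b ha.1 hab' hb.2
    have := one_le_relLoc π ha.1
    have := (hcell a ha.1 ha.2).1
    simp only [f, Prod.Lex.toLex_lt_toLex]
    omega
  have hg : StrictMono g := fun a _ hab =>
    Nat.strictMono_toLex_div_mod m (Nat.sub_lt_sub_right a.2.1 hab)
  have hfg : Set.range f ⊆ Set.range g := by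
    rintro _ ⟨⟨j, hj⟩, rfl⟩
    obtain ⟨hc1, hcm, hcell_j⟩ := hcell j hj.1 hj.2
    refine ⟨⟨(relLoc π j - 1) * m + π j, ⟨by omega, hcell_j⟩⟩, ?_⟩
    have hpos : 0 < m := by omega
    have hsplit : (relLoc π j - 1) * m + π j - 1 = (π j - 1) + (relLoc π j - 1) * m := by omega
    simp only [g, f, hsplit, Nat.add_mul_div_right _ _ hpos, Nat.add_mul_mod_self_right,
      Nat.div_eq_of_lt (show π j - 1 < m by omega), Nat.mod_eq_of_lt (show π j - 1 < m by omega),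
      zero_add]
  have hfi := congrArg (fun p => (ofLex p).1) (congrFun (hf.eq_of_range_subset hg hfg) ⟨i, hi, hin⟩)
  have := one_le_relLoc π hi
  simp only [f, g, ofLex_toLex] at hfi
  omega

lemma MemPi.relLoc_le {L k : ℕ} {s π : ℕ → ℕ} (hπ : MemPi L k s π) {i : ℕ} (hi : 1 ≤ i)
    (hik : i ≤ k) : relLoc π i ≤ s (π i) :=
  hπ.2 (π i) (hπ.1 i hi hik) ▸ relLoc_le_card_filter π hik

lemma MemPi.ne_zero {L k : ℕ} {s π : ℕ → ℕ} (hπ : MemPi L k s π) (hs : s 0 = 0) {i : ℕ}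
    (hi : 1 ≤ i) (hik : i ≤ k) : π i ≠ 0 := by
  have hzero := hπ.2 0 (Nat.zero_le L)
  rw [hs, card_eq_zero, filter_eq_empty_iff] at hzero
  exact hzero (mem_Icc.mpr ⟨hi, hik⟩)

lemma MemPi.eq_of_eq_zero {L k : ℕ} {s π : ℕ → ℕ} (hπ : MemPi L k s π) (hs : s 0 = 1)
    {i j : ℕ} (hi : i ∈ Icc 1 k) (hj : j ∈ Icc 1 k) (hi0 : π i = 0) (hj0 : π j = 0) : i = j :=
  card_le_one.mp ((hπ.2 0 (Nat.zero_le L)).trans hs).le i (mem_filter.mpr ⟨hi, hi0⟩) j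
    (mem_filter.mpr ⟨hj, hj0⟩)

lemma sStar0_mul {R : ℕ} (hR : 0 < R) (m : ℕ) {c : ℕ} (hc : c ≠ 0) :
    sStar0 R (m * R) c = if c ≤ m then R else 0 := by
  simp only [sStar0, Nat.mul_div_cancel m hR, Nat.sub_self, hc, if_false]
  split_ifs <;> omega

lemma sStar1_mul {R m : ℕ} (hR : 0 < R) (hm : 0 < m) {c : ℕ} (hc : c ≠ 0) :
    sStar1 R (m * R) c = if c < m then R else if c = m then R - 1 else 0 := by
  have hmR : R ≤ m * R := Nat.le_mul_of_pos_left R hm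
  have hsub : (m - 1) * R = m * R - R := Nat.sub_one_mul m R
  simp only [sStar1, Nat.mul_sub_one_div hm hR, hc, if_false]
  split_ifs <;> omega

lemma IsVerticalOrder.ne_zero_and_relLoc_of_sStar0 {L R m : ℕ} {π : ℕ → ℕ} (hR : 0 < R)
    (hπ : IsVerticalOrder L (m * R) (sStar0 R (m * R)) π) {i : ℕ} (hi : 1 ≤ i)
    (hik : i ≤ m * R) : π i ≠ 0 ∧ relLoc π i = (i - 1) / m + 1 := by
  obtain ⟨hmem, hvert⟩ := hπ
  have hne : ∀ j, 1 ≤ j → j ≤ m * R → π j ≠ 0 := fun j hj hjk =>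
    hmem.ne_zero (by simp [sStar0]) hj hjk
  refine ⟨hne i hi hik, relLoc_eq_of_vertical (fun j hj hjk => ?_)
    (fun a b ha hab hb => hvert a b ha hab hb (hne a ha (by omega)) (hne b (by omega) hb)) hi hik⟩
  have hc := hne j hj hjk
  have hr := one_le_relLoc π hj
  have hle := hmem.relLoc_le hj hjk
  rw [sStar0_mul hR m hc] at hle
  split_ifs at hle with hcm
  · exact ⟨by omega, hcm, mul_comm R m ▸ Nat.sub_one_mul_add_le hr hle hcm⟩
  · omega

lemma IsPiJ.ne_zero_and_relLoc {L R m : ℕ} {π : ℕ → ℕ} (hR : 0 < R) (hm : 0 < m)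
    (hπ : IsPiJ L R (m * R) (m * R) π) {i : ℕ} (hi : 1 ≤ i) (hik : i < m * R) :
    π i ≠ 0 ∧ relLoc π i = (i - 1) / m + 1 := by
  obtain ⟨hlast, hmem, hvert⟩ := hπ
  have hne : ∀ j, 1 ≤ j → j < m * R → π j ≠ 0 := fun j hj hjk hj0 =>
    hjk.ne (hmem.eq_of_eq_zero (by simp [sStar1]) (mem_Icc.mpr ⟨hj, hjk.le⟩)
      (mem_Icc.mpr ⟨by omega, le_rfl⟩) hj0 hlast)
  refine ⟨hne i hi hik, relLoc_eq_of_vertical (n := m * R - 1) (fun j hj hjk => ?_)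
    (fun a b ha hab hb => hvert a b ha hab (by omega) (hne a ha (by omega)) (hne b (by omega)
      (by omega))) hi (by omega)⟩
  have hc := hne j hj (by omega)
  have hr := one_le_relLoc π hj
  have hle := hmem.relLoc_le hj (by omega)
  have hRm : R * m - m = (R - 1) * m := (Nat.sub_one_mul R m).symm
  rw [sStar1_mul hR hm hc] at hle
  rw [mul_comm m R]
  split_ifs at hle with hlt heq
  · have := Nat.sub_one_mul_add_le hr hle (show π j + 1 ≤ m by omega)
    omega
  · have := Nat.sub_one_mul_add_le hr hle heq.le
    have := Nat.le_mul_of_pos_left m hR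
    omega
  · omega

theorem stmt17_general (L R k dI dC : ℕ) (βI βC α : ℝ)
    (hR : 2 ≤ R) (hk : 2 ≤ k) (hdI : dI = R - 1) (hdvd : R ∣ k)
    (πs : ℕ → ℕ) (hπs : IsVerticalOrder L k (sStar0 R k) πs)
    (πk : ℕ → ℕ) (hπk : IsPiJ L R k k πk) :
    (∀ i, 1 ≤ i → i ≤ k →
      weight dI dC βI βC πs i = weight dI dC βI βC πk i) ∧
    MC k dI dC βI βC α πs = MC k dI dC βI βC α πk := by
  obtain ⟨m, rfl⟩ : ∃ m, k = m * R := hdvd.imp fun c hc => hc.trans (Nat.mul_comm R c)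
  have hR0 : 0 < R := by omega
  have hm : 0 < m := Nat.pos_of_ne_zero (by rintro rfl; omega)
  have hW : ∀ i, 1 ≤ i → i ≤ m * R → weight dI dC βI βC πs i = weight dI dC βI βC πk i := by
    intro i hi hik
    obtain ⟨hs0, hsloc⟩ := hπs.ne_zero_and_relLoc_of_sStar0 hR0 hi hik
    rcases hik.lt_or_eq with hlt | rfl
    · obtain ⟨hk0, hkloc⟩ := hπk.ne_zero_and_relLoc hR0 hm hi hlt
      simp only [weight, aCoef, bCoef, if_neg hs0, if_neg hk0, hsloc, hkloc]
    · have htop : relLoc πs (m * R) = R := by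
        rw [hsloc, mul_comm, Nat.mul_sub_one_div hR0 hm]
        omega
      have hmR : R ≤ m * R := Nat.le_mul_of_pos_left R hm
      simp only [weight, aCoef, bCoef, if_neg hs0, if_pos hπk.1, htop,
        show dI + 1 - R = 0 by omega, show dC - (m * R - R) = dI + dC + 1 - m * R by omega,
        Nat.cast_zero, zero_mul, zero_add]
  exact ⟨hW, sum_congr rfl fun i hi => by rw [hW i (mem_Icc.1 hi).1 (mem_Icc.1 hi).2]⟩

/-- if `R ∣ k` then `w_i(π*(s*)) = w_i(π^(k))` for all `i`, hence
`MC(π*(s*)) = MC(π^(k))`: adding a separate node keeps the capacity. -/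
theorem stmt17 (L R k dI dC : ℕ) (βI βC α : ℝ)
    (hL : 1 ≤ L) (hR : 2 ≤ R) (hk : 2 ≤ k)
    (hdI : dI = R - 1) (hdC : 1 ≤ dC) (hkd : k ≤ dI + dC)
    (hβ : βC ≤ βI) (hβC : 0 < βC) (hα : 0 < α)
    (hkLR : k ≤ L * R) (hdvd : R ∣ k)
    (πs : ℕ → ℕ) (hπs : IsVerticalOrder L k (sStar0 R k) πs)
    (πk : ℕ → ℕ) (hπk : IsPiJ L R k k πk) :
    (∀ i, 1 ≤ i → i ≤ k →
      weight dI dC βI βC πs i = weight dI dC βI βC πk i) ∧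
    MC k dI dC βI βC α πs = MC k dI dC βI βC α πk :=
  stmt17_general L R k dI dC βI βC α hR hk hdI hdvd πs hπs πk hπk
end
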